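/- arXiv:2412.07510 — 3 statements merged into one kernel-verified Lean document; each statement's English description precedes it below -/
import Mathlib

section
/- Let R₁ be a nontrivial commutative ring with identity having at most one nonzero zero-divisor (so Γ(R₁) has diameter 0), and let R₂ be a commutative ring with identity having at least two nonzero zero-divisors such that xy = 0 for all zero-divisors x, y of R₂ (so Γ(R₂) is complete and has diameter 1). Then γ_R(Γ(R₁ × R₂)) = 4. -/
/-- The set of nonzero zero-divisors of a commutative ring `R`. -/
def zdvSet (R : Type*) [CommRing R] : Set R :=
  {x | x ≠ 0 ∧ ∃ y, y ≠ 0 ∧ x * y = 0}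

/-- The zero-divisor graph `Γ(R)`: vertices are the nonzero zero-divisors of `R`,
with distinct `x`, `y` adjacent iff `x * y = 0`. -/
def zeroDivisorGraph (R : Type*) [CommRing R] : SimpleGraph (zdvSet R) where
  Adj a b := a ≠ b ∧ (a : R) * (b : R) = 0
  symm := by
    constructor
    rintro a b ⟨hne, hmul⟩
    exact ⟨hne.symm, by rwa [mul_comm]⟩
  loopless := by constructor; rintro a ⟨hne, _⟩; exact hne rfl

/-- A Roman dominating function: every vertex with value `0` has a neighbour
with value `2`. -/
def IsRomanDominating {V : Type*} (G : SimpleGraph V) (f : V → Fin 3) : Prop :=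
  ∀ u, f u = 0 → ∃ v, G.Adj u v ∧ f v = 2

/-- The Roman domination number: the minimum weight of a (finitely supported)
Roman dominating function. -/
noncomputable def romanDominationNumber {V : Type*} (G : SimpleGraph V) : ℕ :=
  sInf {w | ∃ f : V → Fin 3, IsRomanDominating G f ∧
    {v | f v ≠ 0}.Finite ∧ w = ∑ᶠ v, (f v : ℕ)}


/-!
Let `c ≠ 0` annihilate the (at most one) nonzero zero-divisor of `R₁`, and let `a ≠ b` be nonzero
zero-divisors of `R₂`. Every vertex of `Γ(R₁ × R₂)` is killed by `(c, 0)` or by `(0, b)`, so the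
value `2` on these two vertices is a Roman dominating function of weight `4`.

Conversely, every vertex `t` has three non-neighbours: `(1, 0), (1, a), (1, b)` if `t.1 ≠ 0`, and
`(0, 1), (0, 1 + a), (0, 1 + b)` if `t.1 = 0` (units, since `a² = b² = 0`). So a Roman dominating
function with two vertices of value `2` has weight at least `4`; with exactly one such vertex `t`,
the (at least two) non-neighbours of `t` other than `t` cannot take the value `0`; with none, all
values are positive, and an edge `x y` together with the non-neighbours of `x` gives four vertices.
-/

open Finset Function

theorem Finset.sum_le_finsum {α M : Type*} [AddCommMonoid M] [PartialOrder M]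
    [CanonicallyOrderedAdd M] {f : α → M} (hf : (support f).Finite) (s : Finset α) :
    ∑ i ∈ s, f i ≤ ∑ᶠ i, f i := by
  classical
  rw [finsum_eq_sum_of_support_subset f (s := s ∪ hf.toFinset)
    fun x hx => mem_coe.2 (mem_union_right _ (hf.mem_toFinset.2 hx))]
  exact sum_le_sum_of_subset subset_union_left

section RomanDomination

variable {V : Type*} {G : SimpleGraph V}

theorem sum_val_le_finsum_val {f : V → Fin 3} (hfin : {v | f v ≠ 0}.Finite) (s : Finset V) :
    ∑ v ∈ s, (f v : ℕ) ≤ ∑ᶠ v, (f v : ℕ) :=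
  s.sum_le_finsum (by simpa [support, Fin.val_ne_zero_iff] using hfin)

theorem card_le_sum_val {f : V → Fin 3} {s : Finset V} (hs : ∀ v ∈ s, f v ≠ 0) :
    #s ≤ ∑ v ∈ s, (f v : ℕ) := by
  rw [card_eq_sum_ones]
  exact sum_le_sum fun v hv => Nat.one_le_iff_ne_zero.2 (Fin.val_ne_zero_iff.2 (hs v hv))

theorem romanDominationNumber_eq_two_mul_card {D : Finset V}
    (hD : ∀ u ∉ D, ∃ d ∈ D, G.Adj u d)
    (hlow : ∀ f, IsRomanDominating G f → {v | f v ≠ 0}.Finite → 2 * #D ≤ ∑ᶠ v, (f v : ℕ)) :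
    romanDominationNumber G = 2 * #D := by
  classical
  let f : V → Fin 3 := fun v => if v ∈ D then 2 else 0
  have hf : IsRomanDominating G f := fun u hu => by
    obtain ⟨d, hd, hud⟩ := hD u fun h => by simp [f, h] at hu
    exact ⟨d, hud, if_pos hd⟩
  have hsupp : {v | f v ≠ 0} = D := by
    ext v
    by_cases hv : v ∈ D <;> simp [f, hv]
  have hweight : ∑ᶠ v, (f v : ℕ) = 2 * #D := by
    rw [finsum_eq_sum_of_support_subset _ (s := D) (by simp [Set.subset_def, f]),
      sum_congr rfl fun v hv => (by simp [f, hv] : (f v : ℕ) = 2), sum_const, smul_eq_mul, mul_comm]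
  have hmem : 2 * #D ∈ {w | ∃ f : V → Fin 3, IsRomanDominating G f ∧
      {v | f v ≠ 0}.Finite ∧ w = ∑ᶠ v, (f v : ℕ)} :=
    ⟨f, hf, hsupp ▸ D.finite_toSet, hweight.symm⟩
  exact le_antisymm (Nat.sInf_le hmem)
    (le_csInf ⟨_, hmem⟩ fun w ⟨f, hf, hfin, hw⟩ => hw ▸ hlow f hf hfin)

theorem IsRomanDominating.ne_zero_of_not_adj {f : V → Fin 3} (hf : IsRomanDominating G f)
    {t u : V} (hunique : ∀ v, f v = 2 → v = t) (hu : ¬G.Adj t u) : f u ≠ 0 := by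
  intro hu0
  obtain ⟨v, huv, hv⟩ := hf u hu0
  exact hu (hunique v hv ▸ huv.symm)

theorem IsRomanDominating.four_le_finsum_of_unique {f : V → Fin 3} (hf : IsRomanDominating G f)
    (hfin : {v | f v ≠ 0}.Finite) {t : V} (ht : f t = 2) (hunique : ∀ v, f v = 2 → v = t)
    {s : Finset V} (hs : #s = 3) (hnadj : ∀ u ∈ s, ¬G.Adj t u) :
    4 ≤ ∑ᶠ v, (f v : ℕ) := by
  classical
  have hpos : ∀ u ∈ (insert t s).erase t, f u ≠ 0 := fun u hu =>
    hf.ne_zero_of_not_adj hunique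
      (hnadj u ((mem_insert.1 (mem_of_mem_erase hu)).resolve_left (ne_of_mem_erase hu)))
  calc 4 ≤ 2 + #((insert t s).erase t) := by
        rw [card_erase_of_mem (mem_insert_self t s)]
        have := card_le_card (subset_insert t s)
        omega
    _ ≤ (f t : ℕ) + ∑ v ∈ (insert t s).erase t, (f v : ℕ) := by
        rw [ht]
        exact Nat.add_le_add_left (card_le_sum_val hpos) 2
    _ = ∑ v ∈ insert t s, (f v : ℕ) := add_sum_erase _ (fun v => (f v : ℕ)) (mem_insert_self t s)
    _ ≤ _ := sum_val_le_finsum_val hfin _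

theorem IsRomanDominating.four_le_finsum_of_forall_ne_two {f : V → Fin 3}
    (hf : IsRomanDominating G f) (hfin : {v | f v ≠ 0}.Finite) (htwo : ∀ v, f v ≠ 2)
    {x y : V} (hxy : G.Adj x y) {s : Finset V} (hs : #s = 3) (hnadj : ∀ u ∈ s, ¬G.Adj x u) :
    4 ≤ ∑ᶠ v, (f v : ℕ) := by
  classical
  have hpos : ∀ v, f v ≠ 0 := fun v hv0 => by
    obtain ⟨w, -, hw⟩ := hf v hv0
    exact htwo w hw
  have hy : y ∉ s := fun hy => hnadj y hy hxy
  calc 4 = #(insert y s) := by rw [card_insert_of_notMem hy, hs]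
    _ ≤ ∑ v ∈ insert y s, (f v : ℕ) := card_le_sum_val fun v _ => hpos v
    _ ≤ _ := sum_val_le_finsum_val hfin _

theorem IsRomanDominating.four_le_finsum {f : V → Fin 3} (hf : IsRomanDominating G f)
    (hfin : {v | f v ≠ 0}.Finite) (hedge : ∃ x y, G.Adj x y)
    (hnon : ∀ t, ∃ s : Finset V, #s = 3 ∧ ∀ u ∈ s, ¬G.Adj t u) :
    4 ≤ ∑ᶠ v, (f v : ℕ) := by
  classical
  by_cases htwo : ∃ t, f t = 2
  · obtain ⟨t, ht⟩ := htwo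
    by_cases hsecond : ∃ t', t' ≠ t ∧ f t' = 2
    · obtain ⟨t', hne, ht'⟩ := hsecond
      calc 4 = ∑ v ∈ {t', t}, (f v : ℕ) := by simp [sum_pair hne, ht, ht']
        _ ≤ _ := sum_val_le_finsum_val hfin _
    · obtain ⟨s, hs, hnadj⟩ := hnon t
      exact hf.four_le_finsum_of_unique hfin ht
        (fun v hv => by_contra fun hvt => hsecond ⟨v, hvt, hv⟩) hs hnadj
  · obtain ⟨x, y, hxy⟩ := hedge
    obtain ⟨s, hs, hnadj⟩ := hnon x
    exact hf.four_le_finsum_of_forall_ne_two hfin (fun v hv => htwo ⟨v, hv⟩) hxy hs hnadj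

end RomanDomination

section ZeroDivisorGraph

variable {R R₁ R₂ : Type*} [CommRing R] [CommRing R₁] [CommRing R₂]

theorem exists_ne_zero_forall_mul_eq_zero_of_subsingleton [Nontrivial R]
    (h : (zdvSet R).Subsingleton) : ∃ c ≠ (0 : R), ∀ u ∈ zdvSet R, u * c = 0 := by
  rcases (zdvSet R).eq_empty_or_nonempty with hempty | ⟨x, hx⟩
  · exact ⟨1, one_ne_zero, fun u hu => by simp [hempty] at hu⟩
  · obtain ⟨hx0, y, hy0, hxy⟩ := hx
    have hyx : y = x := h ⟨hy0, x, hx0, by rw [mul_comm, hxy]⟩ ⟨hx0, y, hy0, hxy⟩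
    subst hyx
    exact ⟨y, hy0, fun u hu => by rw [h hu ⟨hx0, y, hy0, hxy⟩, hxy]⟩

theorem mk_zero_mem_zdvSet_prod [Nontrivial R₂] {x : R₁} (hx : x ≠ 0) :
    ((x, 0) : R₁ × R₂) ∈ zdvSet (R₁ × R₂) :=
  ⟨by simp [hx], (0, 1), by simp, by simp⟩

theorem zero_mk_mem_zdvSet_prod [Nontrivial R₁] {y : R₂} (hy : y ≠ 0) :
    ((0, y) : R₁ × R₂) ∈ zdvSet (R₁ × R₂) :=
  ⟨by simp [hy], (1, 0), by simp, by simp⟩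

theorem mk_mem_zdvSet_prod_of_mem_right (x : R₁) {y : R₂} (hy : y ∈ zdvSet R₂) :
    (x, y) ∈ zdvSet (R₁ × R₂) := by
  obtain ⟨hy0, z, hz0, hyz⟩ := hy
  exact ⟨by simp [hy0], (0, z), by simp [hz0], by simp [hyz]⟩

theorem mul_mk_zero_eq_zero_or_mul_zero_mk_eq_zero {c : R₁} {b : R₂}
    (hc : ∀ u ∈ zdvSet R₁, u * c = 0) (hb : ∀ v ∈ zdvSet R₂, v * b = 0)
    {x : R₁ × R₂} (hx : x ∈ zdvSet (R₁ × R₂)) : x * (c, 0) = 0 ∨ x * (0, b) = 0 := by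
  obtain ⟨-, ⟨y₁, y₂⟩, hy0, hxy⟩ := hx
  obtain ⟨x₁, x₂⟩ := x
  simp only [Prod.mk_mul_mk, Prod.mk_eq_zero, mul_zero, and_true, true_and] at hxy ⊢
  rcases eq_or_ne x₁ 0 with rfl | hx₁
  · exact Or.inl (zero_mul c)
  rcases eq_or_ne y₁ 0 with rfl | hy₁
  · have hy₂ : y₂ ≠ 0 := fun h => hy0 (by simp [h])
    rcases eq_or_ne x₂ 0 with rfl | hx₂
    · exact Or.inr (zero_mul b)
    · exact Or.inr (hb x₂ ⟨hx₂, y₂, hy₂, hxy.2⟩)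
  · exact Or.inl (hc x₁ ⟨hx₁, y₁, hy₁, hxy.1⟩)

theorem exists_card_eq_not_adj_zeroDivisorGraph {t : zdvSet R} {S : Finset R}
    (hS : ∀ p ∈ S, p ∈ zdvSet R) (ht : ∀ p ∈ S, (t : R) * p ≠ 0) :
    ∃ s : Finset (zdvSet R), #s = #S ∧ ∀ u ∈ s, ¬(zeroDivisorGraph R).Adj t u := by
  classical
  refine ⟨S.subtype (· ∈ zdvSet R), ?_, fun u hu hadj => ht u (mem_subtype.1 hu) hadj.2⟩
  rw [card_subtype, filter_true_of_mem hS]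

theorem exists_card_three_not_adj_zeroDivisorGraph_prod [Nontrivial R₁] {a b : R₂} (hab : a ≠ b)
    (ha : a ∈ zdvSet R₂) (hb : b ∈ zdvSet R₂)
    (hcomplete : ∀ x ∈ zdvSet R₂, ∀ y ∈ zdvSet R₂, x * y = 0) (t : zdvSet (R₁ × R₂)) :
    ∃ s : Finset (zdvSet (R₁ × R₂)), #s = 3 ∧ ∀ u ∈ s, ¬(zeroDivisorGraph (R₁ × R₂)).Adj t u := by
  classical
  have : Nontrivial R₂ := ⟨⟨a, 0, ha.1⟩⟩
  let Z : Finset R₂ := {0, a, b}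
  have hZ : #Z = 3 := card_eq_three.2 ⟨0, a, b, ha.1.symm, hb.1.symm, hab, rfl⟩
  have hZmem : ∀ z ∈ Z, z = 0 ∨ z ∈ zdvSet R₂ := by
    simp only [Z, mem_insert, mem_singleton]
    rintro z (rfl | rfl | rfl) <;> simp [ha, hb]
  obtain ⟨S, hS, hSmem, hSmul⟩ : ∃ S : Finset (R₁ × R₂), #S = 3 ∧
      (∀ p ∈ S, p ∈ zdvSet (R₁ × R₂)) ∧ ∀ p ∈ S, (t : R₁ × R₂) * p ≠ 0 := by
    by_cases ht₁ : (t : R₁ × R₂).1 = 0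
    · have ht₂ : (t : R₁ × R₂).2 ≠ 0 := fun h => t.2.1 (Prod.ext ht₁ h)
      have hunit : ∀ z ∈ Z, IsUnit (1 + z) := fun z hz => by
        refine IsNilpotent.isUnit_one_add ⟨2, ?_⟩
        rcases hZmem z hz with rfl | hz
        · simp
        · rw [pow_two, hcomplete z hz z hz]
      refine ⟨Z.image fun z => (0, 1 + z), ?_, ?_, ?_⟩
      · rw [card_image_of_injective _ fun z w h => add_left_cancel (congrArg Prod.snd h), hZ]
      all_goals simp only [mem_image]; rintro _ ⟨z, hz, rfl⟩
      · exact zero_mk_mem_zdvSet_prod (hunit z hz).ne_zero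
      · exact fun h => ht₂ ((hunit z hz).mul_left_eq_zero.1 (congrArg Prod.snd h))
    · refine ⟨Z.image fun z => (1, z), ?_, ?_, ?_⟩
      · rw [card_image_of_injective _ fun z w h => congrArg Prod.snd h, hZ]
      all_goals simp only [mem_image]; rintro _ ⟨z, hz, rfl⟩
      · rcases hZmem z hz with rfl | hz
        · exact mk_zero_mem_zdvSet_prod one_ne_zero
        · exact mk_mem_zdvSet_prod_of_mem_right 1 hz
      · exact fun h => ht₁ (by simpa using congrArg Prod.fst h)
  obtain ⟨s, hs, hnadj⟩ := exists_card_eq_not_adj_zeroDivisorGraph hSmem hSmul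
  exact ⟨s, hs.trans hS, hnadj⟩

end ZeroDivisorGraph

theorem stmt_2 (R₁ R₂ : Type*) [CommRing R₁] [CommRing R₂] [Nontrivial R₁]
    (h₁ : (zdvSet R₁).Subsingleton)
    (h₂ : ∃ a b : R₂, a ≠ b ∧ a ∈ zdvSet R₂ ∧ b ∈ zdvSet R₂)
    (hcomplete : ∀ x ∈ zdvSet R₂, ∀ y ∈ zdvSet R₂, x * y = 0) :
    romanDominationNumber (zeroDivisorGraph (R₁ × R₂)) = 4 := by
  classical
  obtain ⟨a, b, hab, ha, hb⟩ := h₂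
  obtain ⟨c, hc0, hc⟩ := exists_ne_zero_forall_mul_eq_zero_of_subsingleton h₁
  have : Nontrivial R₂ := ⟨⟨b, 0, hb.1⟩⟩
  let P : zdvSet (R₁ × R₂) := ⟨(c, 0), mk_zero_mem_zdvSet_prod hc0⟩
  let Q : zdvSet (R₁ × R₂) := ⟨(0, b), mk_mem_zdvSet_prod_of_mem_right 0 hb⟩
  have hPQ : P ≠ Q := fun h => hc0 (congrArg (fun v => v.1.1) h)
  rw [show 4 = 2 * #{P, Q} by rw [card_pair hPQ]]
  refine romanDominationNumber_eq_two_mul_card (fun u hu => ?_) fun f hf hfin => ?_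
  · simp only [mem_insert, mem_singleton, not_or] at hu
    rcases mul_mk_zero_eq_zero_or_mul_zero_mk_eq_zero hc (fun v hv => hcomplete v hv b hb) u.2
      with h | h
    · exact ⟨P, by simp, hu.1, h⟩
    · exact ⟨Q, by simp, hu.2, h⟩
  · rw [card_pair hPQ]
    exact hf.four_le_finsum hfin ⟨P, Q, hPQ, by simp [P, Q]⟩
      (exists_card_three_not_adj_zeroDivisorGraph_prod hab ha hb hcomplete)
end

section
/- Let n = p₁^{m₁} p₂^{m₂} ⋯ p_k^{m_k} where p₁, ..., p_k are distinct primes, m₁, ..., m_k are positive integers, and k ≥ 3. Then γ_R(Γ(ℤ_n)) = 2k. -/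
/-!
By the Chinese remainder theorem `ZMod n ≃+* Π i, ZMod (p i ^ m i)`, and in `ZMod (p ^ m)` the
element `p ^ (m - 1)` kills every non-unit. Every zero-divisor of the product has a non-unit
coordinate `j`, so it is annihilated by `Pi.single j (p j ^ (m j - 1))`; weight `2` on these `k`
vertices gives `γ_R ≤ 2k`.

Conversely, for each `i` consider the vertices supported on `{i}` together with the vertices that
vanish at `i` and are units elsewhere. For `k ≥ 3` these `k` blocks are disjoint, and every
neighbour of a vertex of the second kind is of the first kind. Since at most one factor is
`ZMod 2`, the second kind contains two distinct vertices, so a Roman dominating function has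
weight at least `2` on each block.
-/

open scoped Function

section RomanDomination

variable {V W : Type*} {G : SimpleGraph V}

theorem IsRomanDominating.comp_iso {H : SimpleGraph W} {f : V → Fin 3}
    (hf : IsRomanDominating G f) (e : G ≃g H) : IsRomanDominating H (f ∘ e.symm) := by
  intro u hu
  obtain ⟨v, hadj, hv⟩ := hf (e.symm u) hu
  exact ⟨e v, by simpa using e.map_adj_iff.mpr hadj, by simpa using hv⟩

theorem romanDominationNumber_congr {H : SimpleGraph W} (e : G ≃g H) :
    romanDominationNumber G = romanDominationNumber H := by
  unfold romanDominationNumber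
  congr 1
  ext w
  constructor
  · rintro ⟨f, hf, hfin, rfl⟩
    exact ⟨f ∘ e.symm, hf.comp_iso e, hfin.preimage e.symm.injective.injOn,
      (finsum_comp_equiv e.symm.toEquiv).symm⟩
  · rintro ⟨f, hf, hfin, rfl⟩
    refine ⟨f ∘ e, ?_, hfin.preimage e.injective.injOn, (finsum_comp_equiv e.toEquiv).symm⟩
    simpa using hf.comp_iso e.symm

theorem IsRomanDominating.two_le_sum {f : V → Fin 3} (hf : IsRomanDominating G f)
    {a b : V} (hab : a ≠ b) {T : Finset V} (ha : a ∈ T) (hb : b ∈ T)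
    (hT : ∀ v, G.Adj a v ∨ G.Adj b v → v ∈ T) : 2 ≤ ∑ v ∈ T, (f v : ℕ) := by
  classical
  have two_le_of_zero : ∀ x, f x = 0 → (∀ v, G.Adj x v → v ∈ T) → 2 ≤ ∑ v ∈ T, (f v : ℕ) := by
    intro x hx hxT
    obtain ⟨v, hadj, hv⟩ := hf x hx
    calc 2 = (f v : ℕ) := by rw [hv]; rfl
      _ ≤ ∑ v ∈ T, (f v : ℕ) :=
        Finset.single_le_sum (f := fun v => (f v : ℕ)) (fun _ _ => Nat.zero_le _) (hxT v hadj)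
  by_cases hfa : f a = 0
  · exact two_le_of_zero a hfa fun v h => hT v (.inl h)
  by_cases hfb : f b = 0
  · exact two_le_of_zero b hfb fun v h => hT v (.inr h)
  have hpos : ∀ x, f x ≠ 0 → 1 ≤ (f x : ℕ) := fun x hx => by
    rw [Nat.one_le_iff_ne_zero]; exact fun h => hx (Fin.ext h)
  calc 2 ≤ (f a : ℕ) + f b := by linarith [hpos a hfa, hpos b hfb]
    _ = ∑ v ∈ {a, b}, (f v : ℕ) := (Finset.sum_pair (f := fun v => (f v : ℕ)) hab).symm
    _ ≤ ∑ v ∈ T, (f v : ℕ) :=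
      Finset.sum_le_sum_of_subset (by simp [Finset.insert_subset_iff, ha, hb])

section Finite

variable [Fintype V]

theorem romanDominationNumber_le_sum {f : V → Fin 3} (hf : IsRomanDominating G f) :
    romanDominationNumber G ≤ ∑ v, (f v : ℕ) :=
  Nat.sInf_le ⟨f, hf, Set.toFinite _, (finsum_eq_sum_of_fintype _).symm⟩

theorem le_romanDominationNumber {w : ℕ}
    (h : ∀ f : V → Fin 3, IsRomanDominating G f → w ≤ ∑ v, (f v : ℕ)) :
    w ≤ romanDominationNumber G := by
  refine le_csInf ⟨_, fun _ => 2, fun _ hu => by simp at hu, Set.toFinite _, rfl⟩ ?_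
  rintro _ ⟨f, hf, -, rfl⟩
  rw [finsum_eq_sum_of_fintype]
  exact h f hf

theorem romanDominationNumber_le_two_mul_card (S : Finset V)
    (hS : ∀ v ∉ S, ∃ s ∈ S, G.Adj v s) :
    romanDominationNumber G ≤ 2 * S.card := by
  classical
  refine (romanDominationNumber_le_sum (f := fun v => if v ∈ S then 2 else 0) ?_).trans_eq ?_
  · intro u hu
    have hu : u ∉ S := by simpa using hu
    obtain ⟨s, hs, hadj⟩ := hS u hu
    exact ⟨s, hadj, if_pos hs⟩
  · simp [apply_ite, Finset.sum_ite_mem, mul_comm]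

end Finite

theorem two_mul_card_le_romanDominationNumber [Finite V] {ι : Type*} [Fintype ι]
    (T : ι → Set V) (hT : Pairwise (Disjoint on T))
    (hpair : ∀ i, ∃ a b, a ≠ b ∧ a ∈ T i ∧ b ∈ T i ∧ ∀ v, G.Adj a v ∨ G.Adj b v → v ∈ T i) :
    2 * Fintype.card ι ≤ romanDominationNumber G := by
  classical
  have := Fintype.ofFinite V
  refine le_romanDominationNumber fun f hf => ?_
  have hdisj : (↑(Finset.univ : Finset ι) : Set ι).PairwiseDisjoint fun i => (T i).toFinset :=
    fun i _ j _ hij => Set.disjoint_toFinset.mpr (hT hij)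
  calc 2 * Fintype.card ι = ∑ _i : ι, 2 := by simp [mul_comm]
    _ ≤ ∑ i, ∑ v ∈ (T i).toFinset, (f v : ℕ) := Finset.sum_le_sum fun i _ => by
        obtain ⟨a, b, hab, ha, hb, hN⟩ := hpair i
        exact hf.two_le_sum hab (by simpa using ha) (by simpa using hb) (by simpa using hN)
    _ = ∑ v ∈ Finset.univ.biUnion fun i => (T i).toFinset, (f v : ℕ) :=
        (Finset.sum_biUnion hdisj).symm
    _ ≤ ∑ v, (f v : ℕ) := Finset.sum_le_sum_of_subset (Finset.subset_univ _)

end RomanDomination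

section ZeroDivisorGraph

variable {R S : Type*} [CommRing R] [CommRing S]

theorem RingEquiv.map_mem_zdvSet_iff (e : R ≃+* S) {x : R} :
    e x ∈ zdvSet S ↔ x ∈ zdvSet R := by
  simp only [zdvSet, Set.mem_ofPred_eq, map_ne_zero_iff, e.surjective.exists,
    ← map_mul, EmbeddingLike.map_eq_zero_iff]

def RingEquiv.zeroDivisorGraphIso (e : R ≃+* S) :
    zeroDivisorGraph R ≃g zeroDivisorGraph S where
  toEquiv := e.toEquiv.subtypeEquiv fun _ => e.map_mem_zdvSet_iff.symm
  map_rel_iff' {a b} := by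
    simp [zeroDivisorGraph, ← map_mul, Subtype.ext_iff]

end ZeroDivisorGraph

section Pi

variable {ι : Type*} {R : ι → Type*} [∀ i, CommRing (R i)]

theorem exists_not_isUnit_apply_of_mem_zdvSet {x : ∀ i, R i} (hx : x ∈ zdvSet (∀ i, R i)) :
    ∃ j, ¬IsUnit (x j) := by
  obtain ⟨-, y, hy, hxy⟩ := hx
  obtain ⟨j, hj⟩ := Function.ne_iff.mp hy
  exact ⟨j, fun hu => hj (hu.mul_right_eq_zero.mp (congrFun hxy j))⟩

def piBlock (i : ι) : Set (zdvSet (∀ i, R i)) :=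
  {x | (∀ j ≠ i, x.1 j = 0) ∨ (x.1 i = 0 ∧ ∀ j ≠ i, IsUnit (x.1 j))}

theorem pairwise_disjoint_piBlock [Fintype ι] [∀ i, Nontrivial (R i)] (hι : 3 ≤ Fintype.card ι) :
    Pairwise (Disjoint on piBlock (R := R)) := by
  intro i i' hii'
  obtain ⟨l, hli, hli'⟩ := Cardinal.exists_ne_ne_of_three_le (by simpa using hι) i i'
  refine Set.disjoint_left.mpr fun x hx hx' => ?_
  rcases hx with hD | hC <;> rcases hx' with hD' | hC'
  · refine x.2.1 (funext fun j => ?_)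
    by_cases hj : j = i
    exacts [hj ▸ hD' i hii', hD j hj]
  · exact not_isUnit_zero (hD l hli ▸ hC'.2 l hli')
  · exact not_isUnit_zero (hD' l hli' ▸ hC.2 l hli)
  · exact not_isUnit_zero (hC.1 ▸ hC'.2 i hii')

theorem mem_piBlock_of_mul_eq_zero {i : ι} {x v : zdvSet (∀ i, R i)}
    (hx : ∀ j ≠ i, IsUnit (x.1 j)) (h : x.1 * v.1 = 0) : v ∈ piBlock i :=
  .inl fun j hj => (hx j hj).mul_right_eq_zero.mp (congrFun h j)

variable [DecidableEq ι]

theorem mul_pi_single_eq_zero {x : ∀ i, R i} {j : ι} {c : R j} (h : x j * c = 0) :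
    x * Pi.single j c = 0 := by
  rw [← Pi.single_mul_right, h, Pi.single_zero]

theorem pi_single_mem_zdvSet {i j : ι} [Nontrivial (R j)] (hij : i ≠ j) {z : R i} (hz : z ≠ 0) :
    Pi.single i z ∈ zdvSet (∀ i, R i) :=
  ⟨by simpa using hz, Pi.single j 1, by simp,
    mul_pi_single_eq_zero (by rw [Pi.single_eq_of_ne hij.symm, zero_mul])⟩

theorem romanDominationNumber_zeroDivisorGraph_pi_le [Fintype ι] [Nontrivial ι]
    [∀ i, Finite (R i)] [∀ i, Nontrivial (R i)]
    (hsocle : ∀ i, ∃ z : R i, z ≠ 0 ∧ ∀ x, ¬IsUnit x → x * z = 0) :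
    romanDominationNumber (zeroDivisorGraph (∀ i, R i)) ≤ 2 * Fintype.card ι := by
  have := Fintype.ofFinite (zdvSet (∀ i, R i))
  choose z hz0 hz using hsocle
  let e : ι → zdvSet (∀ i, R i) := fun i =>
    ⟨Pi.single i (z i), pi_single_mem_zdvSet (exists_ne i).choose_spec.symm (hz0 i)⟩
  have he : Function.Injective e := fun i j h => by
    by_contra hij
    have := congrFun (congrArg Subtype.val h) i
    simp [e, Pi.single_eq_of_ne hij, hz0] at this
  calc romanDominationNumber (zeroDivisorGraph (∀ i, R i))
      ≤ 2 * (Finset.univ.map ⟨e, he⟩).card := by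
        refine romanDominationNumber_le_two_mul_card _ fun v hv => ?_
        obtain ⟨j, hj⟩ := exists_not_isUnit_apply_of_mem_zdvSet v.2
        refine ⟨e j, Finset.mem_map_of_mem _ (Finset.mem_univ j), fun h => ?_, ?_⟩
        · exact hv (h ▸ Finset.mem_map_of_mem _ (Finset.mem_univ j))
        · exact mul_pi_single_eq_zero (hz j _ hj)
    _ = 2 * Fintype.card ι := by rw [Finset.card_map, Finset.card_univ]

theorem mem_zdvSet_of_apply_eq_zero {i : ι} [Nontrivial (R i)] {w : ∀ i, R i} (hw : w ≠ 0)
    (hwi : w i = 0) : w ∈ zdvSet (∀ i, R i) :=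
  ⟨hw, Pi.single i 1, by simp, mul_pi_single_eq_zero (by rw [hwi, zero_mul])⟩

theorem exists_pair_piBlock [∀ i, Nontrivial (R i)] {i j : ι} (hji : j ≠ i)
    [Nontrivial (R j)ˣ] :
    ∃ a b, a ≠ b ∧ a ∈ piBlock i ∧ b ∈ piBlock i ∧
      ∀ v, (zeroDivisorGraph (∀ l, R l)).Adj a v ∨ (zeroDivisorGraph (∀ l, R l)).Adj b v →
        v ∈ piBlock i := by
  let w : (R j)ˣ → ∀ l, R l := fun u => Function.update (Function.update 1 j ↑u) i 0
  have hwi : ∀ u, w u i = 0 := fun u => Function.update_self ..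
  have hwj : ∀ u, w u j = u := fun u => by simp [w, hji]
  have hunit : ∀ u, ∀ l ≠ i, IsUnit (w u l) := fun u l hl => by
    by_cases hlj : l = j
    · subst hlj; simp [w, hl]
    · simp [w, hl, hlj]
  have hmem : ∀ u, w u ∈ zdvSet (∀ l, R l) := fun u =>
    mem_zdvSet_of_apply_eq_zero (fun h => u.ne_zero (by rw [← hwj u, h, Pi.zero_apply])) (hwi u)
  obtain ⟨u, hu⟩ := exists_ne (1 : (R j)ˣ)
  refine ⟨⟨w 1, hmem 1⟩, ⟨w u, hmem u⟩, fun h => hu (Units.ext ?_), .inr ⟨hwi 1, hunit 1⟩,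
    .inr ⟨hwi u, hunit u⟩, ?_⟩
  · simpa [hwj] using (congrFun (congrArg Subtype.val h) j).symm
  · rintro v (⟨-, hv⟩ | ⟨-, hv⟩)
    exacts [mem_piBlock_of_mul_eq_zero (hunit 1) hv, mem_piBlock_of_mul_eq_zero (hunit u) hv]

theorem two_mul_card_le_romanDominationNumber_zeroDivisorGraph_pi [Fintype ι]
    [∀ i, Finite (R i)] [∀ i, Nontrivial (R i)] (hι : 3 ≤ Fintype.card ι)
    (hunits : ∀ i, ∃ j ≠ i, Nontrivial (R j)ˣ) :
    2 * Fintype.card ι ≤ romanDominationNumber (zeroDivisorGraph (∀ i, R i)) :=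
  two_mul_card_le_romanDominationNumber piBlock (pairwise_disjoint_piBlock hι) fun i => by
    obtain ⟨j, hji, _⟩ := hunits i
    exact exists_pair_piBlock hji

theorem romanDominationNumber_zeroDivisorGraph_pi [Fintype ι] [∀ i, Finite (R i)]
    [∀ i, Nontrivial (R i)] (hι : 3 ≤ Fintype.card ι)
    (hsocle : ∀ i, ∃ z : R i, z ≠ 0 ∧ ∀ x, ¬IsUnit x → x * z = 0)
    (hunits : ∀ i, ∃ j ≠ i, Nontrivial (R j)ˣ) :
    romanDominationNumber (zeroDivisorGraph (∀ i, R i)) = 2 * Fintype.card ι :=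
  have : Nontrivial ι := Fintype.one_lt_card_iff_nontrivial.mp (by omega)
  (romanDominationNumber_zeroDivisorGraph_pi_le hsocle).antisymm
    (two_mul_card_le_romanDominationNumber_zeroDivisorGraph_pi hι hunits)

end Pi

theorem ZMod.prime_pow_pred_ne_zero {p m : ℕ} (hp : p.Prime) (hm : m ≠ 0) :
    (p : ZMod (p ^ m)) ^ (m - 1) ≠ 0 := by
  rw [← Nat.cast_pow, Ne, ZMod.natCast_eq_zero_iff, Nat.pow_dvd_pow_iff_le_right hp.one_lt]
  omega

theorem ZMod.mul_prime_pow_pred_eq_zero {p m : ℕ} (hp : p.Prime) (hm : m ≠ 0) {x : ZMod (p ^ m)}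
    (hx : ¬IsUnit x) : x * (p : ZMod (p ^ m)) ^ (m - 1) = 0 := by
  have : NeZero (p ^ m) := ⟨pow_ne_zero _ hp.ne_zero⟩
  obtain ⟨a, rfl⟩ := ZMod.natCast_zmod_surjective x
  obtain ⟨c, rfl⟩ : p ∣ a := by
    simpa [ZMod.isUnit_natCast_iff_not_dvd_pow hp (Nat.pos_of_ne_zero hm)] using hx
  rw [← Nat.cast_pow, ← Nat.cast_mul, ZMod.natCast_eq_zero_iff]
  calc p ^ m = p * p ^ (m - 1) := by rw [← pow_succ', Nat.sub_add_cancel (Nat.pos_of_ne_zero hm)]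
    _ ∣ p * c * p ^ (m - 1) := ⟨c, by ring⟩

theorem ZMod.nontrivial_units {n : ℕ} (hn : 2 < n) : Nontrivial (ZMod n)ˣ :=
  have : Fact (2 < n) := ⟨hn⟩
  ⟨-1, 1, fun h => ZMod.neg_one_ne_one (by simpa using congrArg Units.val h)⟩

theorem stmt_11 (k : ℕ) (hk : 3 ≤ k) (p m : Fin k → ℕ)
    (hp : ∀ i, (p i).Prime) (hinj : Function.Injective p)
    (hm : ∀ i, 1 ≤ m i) (n : ℕ) (hn : n = ∏ i, p i ^ m i) :
    romanDominationNumber (zeroDivisorGraph (ZMod n)) = 2 * k := by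
  subst hn
  have hm0 : ∀ i, m i ≠ 0 := fun i => Nat.one_le_iff_ne_zero.mp (hm i)
  have hcop : Pairwise (Nat.Coprime on fun i => p i ^ m i) := fun i j hij =>
    ((Nat.coprime_primes (hp i) (hp j)).mpr (hinj.ne hij)).pow _ _
  have : ∀ i, Fact (1 < p i ^ m i) := fun i => ⟨Nat.one_lt_pow (hm0 i) (hp i).one_lt⟩
  have units_of_ne_two : ∀ j, p j ≠ 2 → Nontrivial (ZMod (p j ^ m j))ˣ := fun j hj =>
    ZMod.nontrivial_units (((hp j).two_le.lt_of_ne' hj).trans_le (Nat.le_self_pow (hm0 j) _))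
  rw [romanDominationNumber_congr (ZMod.prodEquivPi _ hcop).zeroDivisorGraphIso,
    romanDominationNumber_zeroDivisorGraph_pi (by simpa using hk)
      (fun i => ⟨_, ZMod.prime_pow_pred_ne_zero (hp i) (hm0 i),
        fun _ => ZMod.mul_prime_pow_pred_eq_zero (hp i) (hm0 i)⟩) ?_, Fintype.card_fin]
  intro i
  obtain ⟨j, hji, -⟩ := Fin.exists_ne_and_ne_of_two_lt i i hk
  obtain ⟨l, hli, hlj⟩ := Fin.exists_ne_and_ne_of_two_lt i j hk
  by_cases hpj : p j = 2
  · exact ⟨l, hli, units_of_ne_two l fun h => hlj (hinj (h.trans hpj.symm))⟩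
  · exact ⟨j, hji, units_of_ne_two j hpj⟩
end

section
/- If n = p^{m} for a prime p and an integer m ≥ 2 with n > 4, or if n = 2p for an odd prime p, then γ_R(Γ(ℤ_n)) = 2. -/
section RomanDomination

variable {V : Type*} (G : SimpleGraph V)

lemma two_le_finsum_of_isRomanDominating [Nontrivial V] {f : V → Fin 3}
    (hf : IsRomanDominating G f) (hfin : {v | f v ≠ 0}.Finite) : 2 ≤ ∑ᶠ v, (f v : ℕ) := by
  have hsupp : (Function.support fun v => (f v : ℕ)).Finite :=
    hfin.subset fun v hv h0 => hv (by simp [h0])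
  by_cases h2 : ∃ v, f v = 2
  · obtain ⟨v, hv⟩ := h2
    simpa [hv] using single_le_finsum v hsupp fun _ => Nat.zero_le _
  · push Not at h2
    have hpos : ∀ v, (f v : ℕ) ≠ 0 := fun v => Fin.val_ne_zero_iff.2 fun hv => by
      obtain ⟨w, -, hw⟩ := hf v hv
      exact h2 w hw
    classical
    obtain ⟨a, b, hab⟩ := exists_pair_ne V
    calc 2 ≤ ∑ v ∈ {a, b}, (f v : ℕ) := by
          have := hpos a; have := hpos b
          rw [Finset.sum_pair hab]; omega
      _ ≤ ∑ v ∈ hsupp.toFinset, (f v : ℕ) :=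
          Finset.sum_le_sum_of_subset fun v _ => hsupp.mem_toFinset.2 (hpos v)
      _ = ∑ᶠ v, (f v : ℕ) := (finsum_eq_sum_of_support_subset _ (by simp)).symm

theorem romanDominationNumber_eq_two [Nontrivial V] (x : V) (hx : ∀ v, v ≠ x → G.Adj v x) :
    romanDominationNumber G = 2 := by
  classical
  have hmem : 2 ∈ {w | ∃ f : V → Fin 3, IsRomanDominating G f ∧
      {v | f v ≠ 0}.Finite ∧ w = ∑ᶠ v, (f v : ℕ)} := by
    refine ⟨Pi.single x 2, fun u hu => ⟨x, hx u ?_, by simp⟩, ?_, ?_⟩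
    · rintro rfl; simp at hu
    · exact (Set.finite_singleton x).subset Pi.support_single_subset
    · rw [finsum_eq_single _ x fun v hv => by simp [hv]]
      simp
  refine le_antisymm (Nat.sInf_le hmem) (le_csInf ⟨2, hmem⟩ ?_)
  rintro w ⟨f, hf, hfin, rfl⟩
  exact two_le_finsum_of_isRomanDominating G hf hfin

end RomanDomination

theorem zeroDivisorGraph_romanDominationNumber_eq_two {R : Type*} [CommRing R] {x y : R}
    (hx : x ∈ zdvSet R) (hy : y ∈ zdvSet R) (hyx : y ≠ x)
    (hann : ∀ u ∈ zdvSet R, u ≠ x → u * x = 0) :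
    romanDominationNumber (zeroDivisorGraph R) = 2 :=
  have : Nontrivial (zdvSet R) := ⟨⟨⟨y, hy⟩, ⟨x, hx⟩, fun h => hyx congr($h.1)⟩⟩
  romanDominationNumber_eq_two _ ⟨x, hx⟩ fun u hu =>
    ⟨hu, hann u u.2 fun h => hu (Subtype.ext h)⟩

lemma not_isUnit_of_mem_zdvSet {R : Type*} [CommRing R] {x : R} (hx : x ∈ zdvSet R) :
    ¬IsUnit x := by
  obtain ⟨-, y, hy, hxy⟩ := hx
  exact fun hu => hy (hu.mul_right_eq_zero.1 hxy)

namespace ZMod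

lemma natCast_ne_zero_of_pos_of_lt {n a : ℕ} (ha : 0 < a) (han : a < n) : (a : ZMod n) ≠ 0 :=
  fun h => ha.ne' (Nat.eq_zero_of_dvd_of_lt ((natCast_eq_zero_iff a n).1 h) han)

lemma exists_prime_dvd_val_of_not_isUnit {n : ℕ} [NeZero n] {u : ZMod n} (hu : ¬IsUnit u) :
    ∃ q, q.Prime ∧ q ∣ n ∧ q ∣ u.val := by
  have : ¬u.val.Coprime n := fun h => hu (by simpa using (isUnit_iff_coprime _ n).2 h)
  obtain ⟨q, hq, hqu, hqn⟩ := Nat.Prime.not_coprime_iff_dvd.1 this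
  exact ⟨q, hq, hqn, hqu⟩

lemma mul_eq_zero_of_dvd_val {n d : ℕ} [NeZero n] {u x : ZMod n} (hd : d ∣ u.val)
    (hdx : (d : ZMod n) * x = 0) : u * x = 0 := by
  obtain ⟨t, ht⟩ := hd
  rw [← natCast_zmod_val u, ht]
  push_cast
  linear_combination (t : ZMod n) * hdx

lemma mul_pow_eq_zero_of_not_isUnit {p k : ℕ} (hp : p.Prime) {u : ZMod (p ^ (k + 1))}
    (hu : ¬IsUnit u) : u * (p : ZMod (p ^ (k + 1))) ^ k = 0 := by
  have : NeZero (p ^ (k + 1)) := ⟨pow_ne_zero _ hp.ne_zero⟩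
  obtain ⟨q, hq, hqn, hqu⟩ := exists_prime_dvd_val_of_not_isUnit hu
  obtain rfl : q = p := (Nat.prime_dvd_prime_iff_eq hq hp).1 (hq.dvd_of_dvd_pow hqn)
  refine mul_eq_zero_of_dvd_val hqu ?_
  rw [← pow_succ']
  exact_mod_cast natCast_self (q ^ (k + 1))

lemma mul_eq_zero_of_not_isUnit_of_ne {p : ℕ} (hp : p.Prime) {u : ZMod (2 * p)}
    (hu : ¬IsUnit u) (hup : u ≠ p) : u * p = 0 := by
  have : NeZero (2 * p) := ⟨by simp [hp.ne_zero]⟩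
  obtain ⟨q, hq, hqn, hqu⟩ := exists_prime_dvd_val_of_not_isUnit hu
  rcases (Nat.Prime.dvd_mul hq).1 hqn with hq2 | hqp
  · obtain rfl : q = 2 := (Nat.prime_dvd_prime_iff_eq hq Nat.prime_two).1 hq2
    exact mul_eq_zero_of_dvd_val hqu (by exact_mod_cast natCast_self (2 * p))
  · obtain rfl : q = p := (Nat.prime_dvd_prime_iff_eq hq hp).1 hqp
    -- the only multiples of `q` below `2 * q` are `0` and `q`
    obtain ⟨t, ht⟩ := hqu
    have ht2 : t < 2 := by
      have := u.val_lt
      rw [ht, mul_comm 2] at this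
      exact Nat.lt_of_mul_lt_mul_left this
    interval_cases t
    · simp [(val_eq_zero u).1 (by simpa using ht)]
    · exact absurd (by rw [← natCast_zmod_val u, ht, mul_one]) hup

end ZMod

open ZMod in
theorem romanDominationNumber_zeroDivisorGraph_zmod_prime_pow {p k : ℕ} (hp : p.Prime)
    (h4 : 4 < p ^ (k + 2)) : romanDominationNumber (zeroDivisorGraph (ZMod (p ^ (k + 2)))) = 2 := by
  have hp1 := hp.one_lt
  have hpk : p ≤ p ^ (k + 1) := Nat.le_self_pow (by omega) p
  have hpk' : p ^ (k + 2) = p ^ (k + 1) * p := pow_succ p (k + 1)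
  have hpow : (p : ZMod (p ^ (k + 2))) ^ (k + 2) = 0 := by
    exact_mod_cast natCast_self (p ^ (k + 2))
  have hp0 : (p : ZMod (p ^ (k + 2))) ≠ 0 :=
    natCast_ne_zero_of_pos_of_lt hp.pos (by nlinarith)
  have hx0 : (p : ZMod (p ^ (k + 2))) ^ (k + 1) ≠ 0 := by
    exact_mod_cast natCast_ne_zero_of_pos_of_lt (by positivity) (by nlinarith)
  -- `p ^ (k + 1) + p < p ^ (k + 2)` fails only for `p ^ (k + 2) = 4`
  have hy0 : (p : ZMod (p ^ (k + 2))) ^ (k + 1) + p ≠ 0 := by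
    exact_mod_cast natCast_ne_zero_of_pos_of_lt (by positivity) (by nlinarith)
  exact zeroDivisorGraph_romanDominationNumber_eq_two (x := (p : ZMod _) ^ (k + 1))
    ⟨hx0, p, hp0, by rw [← pow_succ]; exact hpow⟩
    ⟨hy0, _, hx0, by linear_combination ((p : ZMod _) ^ k + 1) * hpow⟩
    (by simpa using hp0)
    fun u hu _ => mul_pow_eq_zero_of_not_isUnit hp (not_isUnit_of_mem_zdvSet hu)

open ZMod in
theorem romanDominationNumber_zeroDivisorGraph_zmod_two_mul {p : ℕ} (hp : p.Prime)
    (hodd : Odd p) : romanDominationNumber (zeroDivisorGraph (ZMod (2 * p))) = 2 := by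
  have hp3 : 3 ≤ p := hp.odd_iff.1 hodd
  have h2p : (2 : ZMod (2 * p)) * p = 0 := by exact_mod_cast natCast_self (2 * p)
  have hp0 : (p : ZMod (2 * p)) ≠ 0 := natCast_ne_zero_of_pos_of_lt hp.pos (by omega)
  have h20 : (2 : ZMod (2 * p)) ≠ 0 := by
    exact_mod_cast natCast_ne_zero_of_pos_of_lt (n := 2 * p) two_pos (by omega)
  have h2_ne_p : ((2 : ℕ) : ZMod (2 * p)) ≠ p := by
    rw [Ne, natCast_eq_natCast_iff' _ _ (2 * p), Nat.mod_eq_of_lt (by omega),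
      Nat.mod_eq_of_lt (by omega)]
    omega
  exact zeroDivisorGraph_romanDominationNumber_eq_two (x := (p : ZMod (2 * p)))
    ⟨hp0, 2, h20, by linear_combination h2p⟩ ⟨h20, p, hp0, h2p⟩ (mod_cast h2_ne_p)
    fun u hu hup => mul_eq_zero_of_not_isUnit_of_ne hp (not_isUnit_of_mem_zdvSet hu) hup

theorem stmt_13 (n : ℕ)
    (h : (∃ p m : ℕ, p.Prime ∧ 2 ≤ m ∧ n = p ^ m ∧ 4 < n) ∨
         (∃ p : ℕ, p.Prime ∧ Odd p ∧ n = 2 * p)) :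
    romanDominationNumber (zeroDivisorGraph (ZMod n)) = 2 := by
  rcases h with ⟨p, m, hp, hm, rfl, h4⟩ | ⟨p, hp, hodd, rfl⟩
  · obtain ⟨k, rfl⟩ : ∃ k, m = k + 2 := ⟨m - 2, by omega⟩
    exact romanDominationNumber_zeroDivisorGraph_zmod_prime_pow hp h4
  · exact romanDominationNumber_zeroDivisorGraph_zmod_two_mul hp hodd
end
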